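/- (AMGF evolution bound, L=1 case) Consider v_{t+1} = β_t + w_t with v_0 = 0, where a.s. ‖β_t‖ ≤ ‖v_t‖, and w_t is sub-Gaussian with variance proxy σ_t² and independent of v_t, β_t. Then for all t ≥ 0 and all λ ∈ ℝ, E(Φ_{n,λ}(v_t)) ≤ exp( (λ²/2) ∑_{k=0}^{t-1} σ_k² ). -/

import Mathlib

open MeasureTheory ProbabilityTheory Real
open scoped RealInnerProductSpace

/-- The Averaged Moment Generating Function `Φ_{n,λ}(x) = E_{ℓ∼μS} exp(λ⟨ℓ,x⟩)`,
where `μS` is the (uniform) distribution of `ℓ` on the unit sphere. -/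
noncomputable def amgf {n : ℕ} (μS : Measure (EuclideanSpace ℝ (Fin n))) (lam : ℝ)
    (x : EuclideanSpace ℝ (Fin n)) : ℝ :=
  ∫ l, Real.exp (lam * ⟪l, x⟫) ∂μS

/-- `μS` is the uniform probability measure on the unit sphere of `ℝⁿ`:
it is a probability measure, concentrated on the unit sphere, and invariant
under every rotation (linear isometry) of `ℝⁿ`. -/
def IsUniformOnSphere {n : ℕ} (μS : Measure (EuclideanSpace ℝ (Fin n))) : Prop :=
  IsProbabilityMeasure μS ∧
    μS (Metric.sphere (0 : EuclideanSpace ℝ (Fin n)) 1)ᶜ = 0 ∧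
    ∀ Q : EuclideanSpace ℝ (Fin n) ≃ₗᵢ[ℝ] EuclideanSpace ℝ (Fin n),
      Measure.map Q μS = μS

/-- A random vector `w : Ω → ℝⁿ` is sub-Gaussian with variance proxy `σ2`. -/
def IsSubGaussian {Ω : Type*} [MeasurableSpace Ω] (μ : Measure Ω) {n : ℕ}
    (X : Ω → EuclideanSpace ℝ (Fin n)) (σ2 : ℝ) : Prop :=
  Integrable X μ ∧ (∫ ω, X ω ∂μ) = 0 ∧
    ∀ (lam : ℝ) (l : EuclideanSpace ℝ (Fin n)), ‖l‖ = 1 →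
      Integrable (fun ω => Real.exp (lam * ⟪l, X ω⟫)) μ ∧
      (∫ ω, Real.exp (lam * ⟪l, X ω⟫) ∂μ) ≤ Real.exp (lam ^ 2 * σ2 / 2)

section Aux
variable {n : ℕ} {μS : Measure (EuclideanSpace ℝ (Fin n))}


/-! Rotation invariance of the uniform measure on the sphere makes `Φ_{n,λ}(x)` a function of
`‖x‖` alone; writing it as `∫ cosh (λ⟨ℓ, x⟩) dℓ` shows that this function is nondecreasing.
For a fixed unit vector `ℓ`, independence factors `E exp (λ⟨ℓ, β_t + w_t⟩)` and the sub-Gaussian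
bound controls the `w_t` factor; averaging over `ℓ` (Tonelli) gives
`E Φ(v_{t+1}) ≤ exp (λ²σ_t²/2) E Φ(β_t) ≤ exp (λ²σ_t²/2) E Φ(v_t)`, and induction from `Φ(0) = 1`
concludes. Expectations over `Ω` are lower Lebesgue integrals, so no integrability of `Φ(v_t)`
is needed. -/

theorem integral_le_of_lintegral_ofReal_le {α : Type*} [MeasurableSpace α] {μ : Measure α}
    {f : α → ℝ} (hf : 0 ≤ f) {b : ℝ} (hb : 0 ≤ b)
    (h : ∫⁻ a, ENNReal.ofReal (f a) ∂μ ≤ ENNReal.ofReal b) : ∫ a, f a ∂μ ≤ b := by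
  have hnorm : ENNReal.ofReal ‖∫ a, f a ∂μ‖ ≤ ENNReal.ofReal b := by
    rw [ofReal_norm]
    refine (enorm_integral_le_lintegral_enorm f).trans ?_
    simpa only [Real.enorm_of_nonneg (hf _)] using h
  exact (le_abs_self _).trans ((ENNReal.ofReal_le_ofReal_iff hb).1 hnorm)

section Amgf

variable {Ω : Type*} [MeasurableSpace Ω] {μ : Measure Ω}
  {n : ℕ} {μS : Measure (EuclideanSpace ℝ (Fin n))}

theorem IsSubGaussian.lintegral_exp_inner_le {X : Ω → EuclideanSpace ℝ (Fin n)} {σ2 : ℝ}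
    (hX : IsSubGaussian μ X σ2) (lam : ℝ) {l : EuclideanSpace ℝ (Fin n)} (hl : ‖l‖ = 1) :
    ∫⁻ ω, ENNReal.ofReal (exp (lam * ⟪l, X ω⟫)) ∂μ ≤
      ENNReal.ofReal (exp (lam ^ 2 * σ2 / 2)) := by
  obtain ⟨hint, hbound⟩ := hX.2.2 lam l hl
  rw [← ofReal_integral_eq_lintegral_ofReal hint (ae_of_all _ fun _ => (exp_pos _).le)]
  exact ENNReal.ofReal_le_ofReal hbound

theorem lintegral_exp_inner_add_le {X Y : Ω → EuclideanSpace ℝ (Fin n)} {σ2 : ℝ}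
    (hXm : Measurable X) (hYm : Measurable Y) (hY : IsSubGaussian μ Y σ2)
    (hXY : IndepFun X Y μ) (lam : ℝ) {l : EuclideanSpace ℝ (Fin n)} (hl : ‖l‖ = 1) :
    ∫⁻ ω, ENNReal.ofReal (exp (lam * ⟪l, X ω + Y ω⟫)) ∂μ ≤
      (∫⁻ ω, ENNReal.ofReal (exp (lam * ⟪l, X ω⟫)) ∂μ) *
        ENNReal.ofReal (exp (lam ^ 2 * σ2 / 2)) := by
  have hφ : Measurable fun x : EuclideanSpace ℝ (Fin n) =>
      ENNReal.ofReal (exp (lam * ⟪l, x⟫)) := by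
    fun_prop
  have hsplit : ∀ ω, ENNReal.ofReal (exp (lam * ⟪l, X ω + Y ω⟫)) =
      ENNReal.ofReal (exp (lam * ⟪l, X ω⟫)) * ENNReal.ofReal (exp (lam * ⟪l, Y ω⟫)) :=
    fun ω => by rw [← ENNReal.ofReal_mul (exp_pos _).le, ← exp_add, inner_add_right, mul_add]
  simp_rw [hsplit]
  refine (lintegral_mul_eq_lintegral_mul_lintegral_of_indepFun'' (hφ.comp hXm).aemeasurable
    (hφ.comp hYm).aemeasurable (hXY.comp hφ hφ)).trans_le ?_
  exact mul_le_mul_right (hY.lintegral_exp_inner_le lam hl) _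

theorem IsUniformOnSphere.ae_norm_eq_one (hμS : IsUniformOnSphere μS) :
    ∀ᵐ l ∂μS, ‖l‖ = 1 := by
  refine measure_mono_null (fun l hl => ?_) hμS.2.1
  simpa using hl

theorem IsUniformOnSphere.integrable_exp_inner (hμS : IsUniformOnSphere μS) (lam : ℝ)
    (x : EuclideanSpace ℝ (Fin n)) : Integrable (fun l => exp (lam * ⟪l, x⟫)) μS := by
  have := hμS.1
  refine Integrable.mono' (integrable_const (exp (|lam| * ‖x‖))) (by fun_prop) ?_
  filter_upwards [hμS.ae_norm_eq_one] with l hl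
  rw [Real.norm_eq_abs, abs_exp, exp_le_exp, ← one_mul ‖x‖, ← hl]
  calc lam * ⟪l, x⟫ ≤ |lam| * |⟪l, x⟫| := (le_abs_self _).trans (abs_mul _ _).le
    _ ≤ |lam| * (‖l‖ * ‖x‖) := by gcongr; exact abs_real_inner_le_norm l x

theorem IsUniformOnSphere.integrable_cosh_inner (hμS : IsUniformOnSphere μS) (lam : ℝ)
    (x : EuclideanSpace ℝ (Fin n)) : Integrable (fun l => cosh (lam * ⟪l, x⟫)) μS := by
  simp_rw [cosh_eq]
  refine ((hμS.integrable_exp_inner lam x).add ?_).div_const 2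
  simpa using hμS.integrable_exp_inner (-lam) x

theorem amgf_nonneg (lam : ℝ) (x : EuclideanSpace ℝ (Fin n)) : 0 ≤ amgf μS lam x :=
  integral_nonneg fun _ => (exp_pos _).le

theorem amgf_zero [IsProbabilityMeasure μS] (lam : ℝ) : amgf μS lam 0 = 1 := by
  simp [amgf]

theorem amgf_linearIsometryEquiv (hμS : IsUniformOnSphere μS)
    (Q : EuclideanSpace ℝ (Fin n) ≃ₗᵢ[ℝ] EuclideanSpace ℝ (Fin n))
    (lam : ℝ) (x : EuclideanSpace ℝ (Fin n)) :
    amgf μS lam (Q x) = amgf μS lam x := by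
  have hadj : ∀ l, ⟪l, Q x⟫ = ⟪Q.symm l, x⟫ := fun l => by
    rw [← Q.inner_map_map (Q.symm l) x, Q.apply_symm_apply]
  simp_rw [amgf, hadj]
  conv_rhs => rw [← hμS.2.2 Q.symm]
  rw [integral_map Q.symm.continuous.aemeasurable (by fun_prop)]

theorem amgf_eq_of_norm_eq (hμS : IsUniformOnSphere μS) (lam : ℝ)
    {x y : EuclideanSpace ℝ (Fin n)} (h : ‖x‖ = ‖y‖) : amgf μS lam x = amgf μS lam y := by
  rw [← Submodule.reflection_sub h, amgf_linearIsometryEquiv hμS]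

theorem amgf_eq_integral_cosh (hμS : IsUniformOnSphere μS) (lam : ℝ)
    (x : EuclideanSpace ℝ (Fin n)) : amgf μS lam x = ∫ l, cosh (lam * ⟪l, x⟫) ∂μS := by
  have hneg : amgf μS lam (-x) = amgf μS lam x :=
    amgf_linearIsometryEquiv hμS (LinearIsometryEquiv.neg ℝ) lam x
  have hint := hμS.integrable_exp_inner
  simp_rw [cosh_eq, integral_div]
  rw [integral_add (hint lam x) (by simpa using hint (-lam) x)]
  simp only [amgf, inner_neg_right, mul_neg] at hneg ⊢
  linarith

theorem amgf_smul_le (hμS : IsUniformOnSphere μS) (lam : ℝ) (x : EuclideanSpace ℝ (Fin n))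
    {c : ℝ} (hc : |c| ≤ 1) : amgf μS lam (c • x) ≤ amgf μS lam x := by
  rw [amgf_eq_integral_cosh hμS, amgf_eq_integral_cosh hμS]
  refine integral_mono (hμS.integrable_cosh_inner lam _) (hμS.integrable_cosh_inner lam _)
    fun l => cosh_le_cosh.2 ?_
  rw [real_inner_smul_right, mul_left_comm, abs_mul c]
  exact mul_le_of_le_one_left (abs_nonneg _) hc

theorem amgf_mono (hμS : IsUniformOnSphere μS) (lam : ℝ) {x y : EuclideanSpace ℝ (Fin n)}
    (h : ‖y‖ ≤ ‖x‖) : amgf μS lam y ≤ amgf μS lam x := by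
  rcases eq_or_ne x 0 with rfl | hx
  · rw [norm_le_zero_iff.1 (h.trans norm_zero.le)]
  have hnorm : ‖y‖ = ‖(‖y‖ / ‖x‖) • x‖ := by
    rw [norm_smul, Real.norm_of_nonneg (by positivity),
      div_mul_cancel₀ _ (norm_ne_zero_iff.2 hx)]
  rw [amgf_eq_of_norm_eq hμS lam hnorm]
  refine amgf_smul_le hμS lam x ?_
  rw [abs_of_nonneg (by positivity)]
  exact div_le_one_of_le₀ h (norm_nonneg x)

theorem ofReal_amgf_eq_lintegral (hμS : IsUniformOnSphere μS) (lam : ℝ)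
    (x : EuclideanSpace ℝ (Fin n)) :
    ENNReal.ofReal (amgf μS lam x) = ∫⁻ l, ENNReal.ofReal (exp (lam * ⟪l, x⟫)) ∂μS :=
  ofReal_integral_eq_lintegral_ofReal (hμS.integrable_exp_inner lam x)
    (ae_of_all _ fun _ => (exp_pos _).le)

theorem lintegral_amgf_comp_eq [SFinite μ] (hμS : IsUniformOnSphere μS) (lam : ℝ)
    {f : Ω → EuclideanSpace ℝ (Fin n)} (hf : Measurable f) :
    ∫⁻ ω, ENNReal.ofReal (amgf μS lam (f ω)) ∂μ =
      ∫⁻ l, ∫⁻ ω, ENNReal.ofReal (exp (lam * ⟪l, f ω⟫)) ∂μ ∂μS := by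
  have := hμS.1
  simp_rw [ofReal_amgf_eq_lintegral hμS]
  exact lintegral_lintegral_swap (by fun_prop)

theorem lintegral_amgf_add_le [SFinite μ] (hμS : IsUniformOnSphere μS)
    {X Y : Ω → EuclideanSpace ℝ (Fin n)} {σ2 : ℝ} (hXm : Measurable X) (hYm : Measurable Y)
    (hY : IsSubGaussian μ Y σ2) (hXY : IndepFun X Y μ) (lam : ℝ) :
    ∫⁻ ω, ENNReal.ofReal (amgf μS lam (X ω + Y ω)) ∂μ ≤
      (∫⁻ ω, ENNReal.ofReal (amgf μS lam (X ω)) ∂μ) *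
        ENNReal.ofReal (exp (lam ^ 2 * σ2 / 2)) := by
  refine (lintegral_amgf_comp_eq hμS lam (hXm.add hYm)).trans_le ?_
  rw [lintegral_amgf_comp_eq hμS lam hXm, ← lintegral_mul_const' _ _ ENNReal.ofReal_ne_top]
  refine lintegral_mono_ae ?_
  filter_upwards [hμS.ae_norm_eq_one] with l hl
  exact lintegral_exp_inner_add_le hXm hYm hY hXY lam hl

end Amgf

theorem amgf_evolution_bound_general
    {Ω : Type*} [MeasurableSpace Ω] (μ : Measure Ω) [IsProbabilityMeasure μ]
    {n : ℕ} (μS : Measure (EuclideanSpace ℝ (Fin n))) (hμS : IsUniformOnSphere μS)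
    (v β w : ℕ → Ω → EuclideanSpace ℝ (Fin n)) (σ2 : ℕ → ℝ)
    (hv0 : ∀ ω, v 0 ω = 0)
    (hdyn : ∀ t ω, v (t + 1) ω = β t ω + w t ω)
    (hβ : ∀ t ω, ‖β t ω‖ ≤ ‖v t ω‖)
    (hβm : ∀ t, Measurable (β t))
    (hwm : ∀ t, Measurable (w t))
    (hw : ∀ t, IsSubGaussian μ (w t) (σ2 t))
    (hindep : ∀ t, IndepFun (w t) (fun ω => (v t ω, β t ω)) μ) :
    ∀ (t : ℕ) (lam : ℝ),
      (∫ ω, amgf μS lam (v t ω) ∂μ) ≤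
        Real.exp (lam ^ 2 / 2 * ∑ k ∈ Finset.range t, σ2 k) := by
  have := hμS.1
  intro t lam
  refine integral_le_of_lintegral_ofReal_le (fun ω => amgf_nonneg lam _) (exp_pos _).le ?_
  induction t with
  | zero => simp [hv0, amgf_zero]
  | succ t ih =>
    have hindep_β : IndepFun (β t) (w t) μ :=
      ((hindep t).comp measurable_id measurable_snd).symm
    simp_rw [hdyn t]
    calc ∫⁻ ω, ENNReal.ofReal (amgf μS lam (β t ω + w t ω)) ∂μ
        ≤ (∫⁻ ω, ENNReal.ofReal (amgf μS lam (β t ω)) ∂μ) *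
            ENNReal.ofReal (exp (lam ^ 2 * σ2 t / 2)) :=
          lintegral_amgf_add_le hμS (hβm t) (hwm t) (hw t) hindep_β lam
      _ ≤ ENNReal.ofReal (exp (lam ^ 2 / 2 * ∑ k ∈ Finset.range t, σ2 k)) *
            ENNReal.ofReal (exp (lam ^ 2 * σ2 t / 2)) := by
          gcongr
          exact (lintegral_mono fun ω => ENNReal.ofReal_le_ofReal
            (amgf_mono hμS lam (hβ t ω))).trans ih
      _ = ENNReal.ofReal (exp (lam ^ 2 / 2 * ∑ k ∈ Finset.range (t + 1), σ2 k)) := by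
          rw [← ENNReal.ofReal_mul (exp_pos _).le, ← exp_add, Finset.sum_range_succ]
          ring_nf

/-- AMGF evolution bound, L = 1 case: for `v_{t+1} = β_t + w_t`
with `v_0 = 0`, `‖β_t‖ ≤ ‖v_t‖`, and `w_t` sub-Gaussian with variance proxy
`σ_t²` and independent of `(v_t, β_t)`, it holds that
`E Φ_{n,λ}(v_t) ≤ exp((λ²/2) ∑_{k<t} σ_k²)` for all `t` and `λ`. -/
theorem amgf_evolution_bound
    {Ω : Type*} [MeasurableSpace Ω] (μ : Measure Ω) [IsProbabilityMeasure μ]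
    {n : ℕ} (μS : Measure (EuclideanSpace ℝ (Fin n))) (hμS : IsUniformOnSphere μS)
    (v β w : ℕ → Ω → EuclideanSpace ℝ (Fin n)) (σ2 : ℕ → ℝ)
    (hv0 : ∀ ω, v 0 ω = 0)
    (hdyn : ∀ t ω, v (t + 1) ω = β t ω + w t ω)
    (hβ : ∀ t ω, ‖β t ω‖ ≤ ‖v t ω‖)
    (hvm : ∀ t, Measurable (v t)) (hβm : ∀ t, Measurable (β t))
    (hwm : ∀ t, Measurable (w t))
    (hw : ∀ t, IsSubGaussian μ (w t) (σ2 t))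
    (hindep : ∀ t, IndepFun (w t) (fun ω => (v t ω, β t ω)) μ) :
    ∀ (t : ℕ) (lam : ℝ),
      (∫ ω, amgf μS lam (v t ω) ∂μ) ≤
        Real.exp (lam ^ 2 / 2 * ∑ k ∈ Finset.range t, σ2 k) :=
  amgf_evolution_bound_general μ μS hμS v β w σ2 hv0 hdyn hβ hβm hwm hw hindep
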